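/- For the Dubins system, for any two points q₀, q₁ ∈ ℝ³ there exist a time T ≥ 0 and an admissible trajectory q on [0,T] with q(0) = q₀ and q(T) = q₁ (complete controllability). -/

import Mathlib

open MeasureTheory Set

noncomputable section

/-- An admissible trajectory of the Dubins system on `[0, T]`:
a measurable control `(u, v)` with `u t ∈ [-umax, umax]` and `v t ∈ [vmin, vmax]` a.e.,
and a Lipschitz curve `(x, y, θ)` satisfying `x' = v cos θ`, `y' = v sin θ`, `θ' = u` a.e. -/
def DubinsTraj (umax vmin vmax T : ℝ) (x y θ : ℝ → ℝ) (u v : ℝ → ℝ) : Prop :=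
  Measurable u ∧ Measurable v ∧
  (∀ᵐ t ∂volume, t ∈ Icc (0 : ℝ) T → u t ∈ Icc (-umax) umax ∧ v t ∈ Icc vmin vmax) ∧
  (∃ K, LipschitzOnWith K (fun t => (x t, y t, θ t)) (Icc (0 : ℝ) T)) ∧
  (∀ᵐ t ∂volume, t ∈ Icc (0 : ℝ) T →
    HasDerivWithinAt x (v t * Real.cos (θ t)) (Icc (0 : ℝ) T) t ∧
    HasDerivWithinAt y (v t * Real.sin (θ t)) (Icc (0 : ℝ) T) t ∧
    HasDerivWithinAt θ (u t) (Icc (0 : ℝ) T) t)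

/-! States with the same left-turn centre are joined by turning left long enough and then
unwinding whole right circles, which returns to the same point and only lowers `θ` by a multiple
of `2π`. A straight segment along the vector joining two left-turn centres carries one left circle
onto the other, so arc, segment and arc join any two states. -/

open scoped NNReal

section Concat

variable {α : Type*} {T T' t : ℝ} {f g : ℝ → α}

def concat (T : ℝ) (f g : ℝ → α) (t : ℝ) : α := if t ≤ T then f t else g (t - T)

theorem concat_apply_of_le (ht : t ≤ T) : concat T f g t = f t := if_pos ht

theorem concat_apply_of_lt (ht : T < t) : concat T f g t = g (t - T) := if_neg ht.not_ge

theorem concat_apply_of_le_of_eq (h : f T = g 0) (ht : T ≤ t) : concat T f g t = g (t - T) := by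
  rcases ht.eq_or_lt with rfl | ht
  · rw [concat_apply_of_le le_rfl, sub_self, h]
  · exact concat_apply_of_lt ht

theorem concat_add (h : f T = g 0) (hT' : 0 ≤ T') : concat T f g (T + T') = g T' := by
  rw [concat_apply_of_le_of_eq h (le_add_of_nonneg_right hT'), add_sub_cancel_left]

theorem Measurable.concat [MeasurableSpace α] (hf : Measurable f) (hg : Measurable g) :
    Measurable (concat T f g) :=
  hf.ite measurableSet_Iic (hg.comp (measurable_id.sub_const T))

theorem LipschitzOnWith.Icc_union [PseudoMetricSpace α] {K : ℝ≥0} {a b c : ℝ}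
    (hab : LipschitzOnWith K f (Icc a b)) (hbc : LipschitzOnWith K f (Icc b c)) :
    LipschitzOnWith K f (Icc a c) := by
  have key : ∀ s ∈ Icc a c, ∀ t ∈ Icc a c, s ≤ t → dist (f s) (f t) ≤ K * dist s t := by
    intro s hs t ht hst
    by_cases hbs : b ≤ s
    · exact hbc.dist_le_mul _ ⟨hbs, hs.2⟩ _ ⟨hbs.trans hst, ht.2⟩
    by_cases htb : t ≤ b
    · exact hab.dist_le_mul _ ⟨hs.1, hst.trans htb⟩ _ ⟨ht.1, htb⟩
    push Not at hbs htb
    calc dist (f s) (f t) ≤ dist (f s) (f b) + dist (f b) (f t) := dist_triangle _ _ _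
      _ ≤ K * dist s b + K * dist b t :=
          add_le_add (hab.dist_le_mul _ ⟨hs.1, hbs.le⟩ _ ⟨hs.1.trans hbs.le, le_rfl⟩)
            (hbc.dist_le_mul _ ⟨le_rfl, htb.le.trans ht.2⟩ _ ⟨htb.le, ht.2⟩)
      _ = K * dist s t := by
          rw [Real.dist_eq, Real.dist_eq, Real.dist_eq, abs_of_neg (sub_neg.2 hbs),
            abs_of_neg (sub_neg.2 htb), abs_of_nonpos (sub_nonpos.2 hst)]
          ring
  refine lipschitzOnWith_iff_dist_le_mul.2 fun s hs t ht => ?_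
  rcases le_total s t with hst | hts
  · exact key s hs t ht hst
  · rw [dist_comm, dist_comm s]; exact key t ht s hs hts

theorem LipschitzOnWith.concat [PseudoMetricSpace α] {K K' : ℝ≥0}
    (hf : LipschitzOnWith K f (Icc 0 T)) (hg : LipschitzOnWith K' g (Icc 0 T'))
    (h : f T = g 0) : LipschitzOnWith (max K K') (concat T f g) (Icc 0 (T + T')) := by
  refine LipschitzOnWith.Icc_union (b := T) ?_ ?_
  · intro s hs t ht
    rw [concat_apply_of_le hs.2, concat_apply_of_le ht.2]
    exact (hf.weaken (le_max_left K K')) hs ht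
  · intro s hs t ht
    rw [concat_apply_of_le_of_eq h hs.1, concat_apply_of_le_of_eq h ht.1, ← edist_sub_right s t T]
    exact (hg.weaken (le_max_right K K')) ⟨sub_nonneg.2 hs.1, by linarith [hs.2]⟩
      ⟨sub_nonneg.2 ht.1, by linarith [ht.2]⟩

end Concat

section ConcatDeriv

variable {T T' t d : ℝ} {f g : ℝ → ℝ}

theorem HasDerivWithinAt.concat_of_lt (ht : t < T) (hf : HasDerivWithinAt f d (Icc 0 T) t) :
    HasDerivWithinAt (concat T f g) d (Icc 0 (T + T')) t := by
  rw [← hasDerivWithinAt_inter (Iio_mem_nhds ht)]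
  exact (hf.mono fun s hs => ⟨hs.1.1, hs.2.le⟩).congr (fun s hs => concat_apply_of_le hs.2.le)
    (concat_apply_of_le ht.le)

theorem HasDerivWithinAt.concat_of_gt (ht : T < t)
    (hg : HasDerivWithinAt g d (Icc 0 T') (t - T)) :
    HasDerivWithinAt (concat T f g) d (Icc 0 (T + T')) t := by
  rw [← hasDerivWithinAt_inter (Ioi_mem_nhds ht)]
  have hmaps : MapsTo (· - T) (Icc 0 (T + T') ∩ Ioi T) (Icc 0 T') :=
    fun s hs => ⟨sub_nonneg.2 hs.2.le, by linarith [hs.1.2]⟩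
  have hshift := hg.comp t ((hasDerivAt_id t).sub_const T).hasDerivWithinAt hmaps
  rw [mul_one] at hshift
  exact hshift.congr (fun s hs => concat_apply_of_lt hs.2) (concat_apply_of_lt ht)

end ConcatDeriv

theorem ae_Icc_add_imp {T T' : ℝ} {P Q : ℝ → Prop} (hP : ∀ᵐ t, t ∈ Icc 0 T → P t)
    (hQ : ∀ᵐ t, t ∈ Icc 0 T' → Q t) :
    ∀ᵐ t, t ∈ Icc 0 (T + T') → t < T ∧ P t ∨ T < t ∧ Q (t - T) := by
  have hQ' := (measurePreserving_sub_right volume T).quasiMeasurePreserving.ae hQ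
  filter_upwards [hP, hQ', Measure.ae_ne volume T] with t hPt hQt hne ht
  rcases hne.lt_or_gt with hlt | hgt
  · exact .inl ⟨hlt, hPt ⟨ht.1, hlt.le⟩⟩
  · exact .inr ⟨hgt, hQt ⟨sub_nonneg.2 hgt.le, by linarith [ht.2]⟩⟩

open Real

def DubinsReachable (umax vmin vmax : ℝ) (q₀ q₁ : ℝ × ℝ × ℝ) : Prop :=
  ∃ T : ℝ, 0 ≤ T ∧ ∃ x y θ u v : ℝ → ℝ,
    DubinsTraj umax vmin vmax T x y θ u v ∧ (x 0, y 0, θ 0) = q₀ ∧ (x T, y T, θ T) = q₁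

section Dubins

variable {umax vmin vmax : ℝ}

theorem DubinsReachable.trans {q₀ q₁ q₂ : ℝ × ℝ × ℝ}
    (h₁ : DubinsReachable umax vmin vmax q₀ q₁) (h₂ : DubinsReachable umax vmin vmax q₁ q₂) :
    DubinsReachable umax vmin vmax q₀ q₂ := by
  obtain ⟨T₁, hT₁, x₁, y₁, θ₁, u₁, v₁, ⟨hu₁, hv₁, hb₁, ⟨K₁, hK₁⟩, hd₁⟩, rfl, hend₁⟩ := h₁
  obtain ⟨T₂, hT₂, x₂, y₂, θ₂, u₂, v₂, ⟨hu₂, hv₂, hb₂, ⟨K₂, hK₂⟩, hd₂⟩, hstart₂, rfl⟩ := h₂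
  obtain ⟨hx, hy, hθ⟩ : x₁ T₁ = x₂ 0 ∧ y₁ T₁ = y₂ 0 ∧ θ₁ T₁ = θ₂ 0 := by
    simpa only [Prod.mk.injEq] using hend₁.trans hstart₂.symm
  refine ⟨T₁ + T₂, add_nonneg hT₁ hT₂, concat T₁ x₁ x₂, concat T₁ y₁ y₂, concat T₁ θ₁ θ₂,
    concat T₁ u₁ u₂, concat T₁ v₁ v₂, ⟨hu₁.concat hu₂, hv₁.concat hv₂, ?_, ⟨max K₁ K₂, ?_⟩, ?_⟩,
    by simp only [concat_apply_of_le hT₁],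
    by simp only [concat_add hx hT₂, concat_add hy hT₂, concat_add hθ hT₂]⟩
  · filter_upwards [ae_Icc_add_imp hb₁ hb₂] with t h ht
    rcases h ht with ⟨hlt, hb⟩ | ⟨hgt, hb⟩
    · rwa [concat_apply_of_le hlt.le, concat_apply_of_le hlt.le]
    · rwa [concat_apply_of_lt hgt, concat_apply_of_lt hgt]
  · have hcurve : (fun t => (concat T₁ x₁ x₂ t, concat T₁ y₁ y₂ t, concat T₁ θ₁ θ₂ t)) =
        concat T₁ (fun t => (x₁ t, y₁ t, θ₁ t)) (fun t => (x₂ t, y₂ t, θ₂ t)) := by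
      funext t
      unfold concat
      split_ifs <;> rfl
    rw [hcurve]
    exact hK₁.concat hK₂ (by rw [hx, hy, hθ])
  · filter_upwards [ae_Icc_add_imp hd₁ hd₂] with t h ht
    rcases h ht with ⟨hlt, hx', hy', hθ'⟩ | ⟨hgt, hx', hy', hθ'⟩
    · simp only [concat_apply_of_le hlt.le]
      exact ⟨hx'.concat_of_lt hlt, hy'.concat_of_lt hlt, hθ'.concat_of_lt hlt⟩
    · simp only [concat_apply_of_lt hgt]
      exact ⟨hx'.concat_of_gt hgt, hy'.concat_of_gt hgt, hθ'.concat_of_gt hgt⟩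

theorem dubinsTraj_of_const {T u v : ℝ} {x y θ : ℝ → ℝ} (hu : u ∈ Icc (-umax) umax)
    (hv : v ∈ Icc vmin vmax) (hx : ∀ t, HasDerivAt x (v * cos (θ t)) t)
    (hy : ∀ t, HasDerivAt y (v * sin (θ t)) t) (hθ : ∀ t, HasDerivAt θ u t) :
    DubinsTraj umax vmin vmax T x y θ (fun _ => u) (fun _ => v) := by
  refine ⟨measurable_const, measurable_const, .of_forall fun _ _ => ⟨hu, hv⟩,
    ⟨max ‖v‖₊ ‖u‖₊, ?_⟩, .of_forall fun t _ =>
      ⟨(hx t).hasDerivWithinAt, (hy t).hasDerivWithinAt, (hθ t).hasDerivWithinAt⟩⟩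
  refine (convex_Icc 0 T).lipschitzOnWith_of_nnnorm_hasDerivWithin_le
    (fun t _ => ((hx t).prodMk ((hy t).prodMk (hθ t))).hasDerivWithinAt) fun t _ => ?_
  have hcos : ‖v * cos (θ t)‖₊ ≤ ‖v‖₊ := by
    rw [nnnorm_mul]
    exact mul_le_of_le_one_right' (by rw [← NNReal.coe_le_coe, coe_nnnorm]; exact abs_cos_le_one _)
  have hsin : ‖v * sin (θ t)‖₊ ≤ ‖v‖₊ := by
    rw [nnnorm_mul]
    exact mul_le_of_le_one_right' (by rw [← NNReal.coe_le_coe, coe_nnnorm]; exact abs_sin_le_one _)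
  simp only [Prod.nnnorm_def]
  exact max_le (hcos.trans (le_max_left _ _))
    (max_le (hsin.trans (le_max_left _ _)) (le_max_right _ _))

end Dubins

/-- The state with heading `θ` on the circle of centre `(a, b)` and signed radius `r`: the
constant control `(u, v)`, `u ≠ 0`, moves along `circleState (v / u) a b`. -/
def circleState (r a b θ : ℝ) : ℝ × ℝ × ℝ := (a + r * sin θ, b - r * cos θ, θ)

section Maneuvers

variable {umax vmin vmax : ℝ}

theorem dubinsReachable_arc {u v : ℝ} (hu : u ∈ Icc (-umax) umax) (hu0 : u ≠ 0)
    (hv : v ∈ Icc vmin vmax) (a b : ℝ) {θ₀ θ₁ : ℝ} (h : 0 ≤ (θ₁ - θ₀) / u) :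
    DubinsReachable umax vmin vmax (circleState (v / u) a b θ₀) (circleState (v / u) a b θ₁) := by
  have hθ (t : ℝ) : HasDerivAt (fun t => θ₀ + u * t) u t := by
    simpa using ((hasDerivAt_id t).const_mul u).const_add θ₀
  refine ⟨(θ₁ - θ₀) / u, h, fun t => a + v / u * sin (θ₀ + u * t),
    fun t => b - v / u * cos (θ₀ + u * t), fun t => θ₀ + u * t, fun _ => u, fun _ => v,
    dubinsTraj_of_const hu hv (fun t => ?_) (fun t => ?_) hθ, by simp [circleState], ?_⟩
  · exact (((hθ t).sin.const_mul (v / u)).const_add a).congr_deriv (by field_simp)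
  · exact (((hθ t).cos.const_mul (v / u)).const_sub b).congr_deriv (by field_simp)
  · have hend : θ₀ + u * ((θ₁ - θ₀) / u) = θ₁ := by field_simp; ring
    simp only [hend, circleState]

theorem dubinsReachable_line (humax : 0 ≤ umax) {v : ℝ} (hv : v ∈ Icc vmin vmax) (hv0 : 0 < v)
    (r a b φ : ℝ) {d : ℝ} (hd : 0 ≤ d) :
    DubinsReachable umax vmin vmax (circleState r a b φ)
      (circleState r (a + d * cos φ) (b + d * sin φ) φ) := by
  refine ⟨d / v, div_nonneg hd hv0.le, fun t => a + r * sin φ + v * cos φ * t,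
    fun t => b - r * cos φ + v * sin φ * t, fun _ => φ, fun _ => 0, fun _ => v,
    dubinsTraj_of_const ⟨by linarith, humax⟩ hv (fun t => ?_) (fun t => ?_)
      (fun t => hasDerivAt_const t φ), by simp [circleState], ?_⟩
  · simpa using ((hasDerivAt_id t).const_mul (v * cos φ)).const_add (a + r * sin φ)
  · simpa using ((hasDerivAt_id t).const_mul (v * sin φ)).const_add (b - r * cos φ)
  · simp only [circleState, Prod.mk.injEq, and_true]
    constructor <;> field_simp <;> ring

theorem dubinsReachable_circleState (humax : 0 < umax) (hv : vmin ≤ vmax) (a b θ₀ θ₁ : ℝ) :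
    DubinsReachable umax vmin vmax (circleState (vmin / umax) a b θ₀)
      (circleState (vmin / umax) a b θ₁) := by
  set r := vmin / umax
  obtain ⟨n, hn⟩ := exists_nat_ge ((θ₀ - θ₁) / (2 * π))
  set ψ := θ₁ + n * (2 * π)
  have hψ : θ₀ ≤ ψ := by
    have := (div_le_iff₀ (by positivity : (0 : ℝ) < 2 * π)).1 hn
    linarith
  have hvmin : vmin ∈ Icc vmin vmax := ⟨le_rfl, hv⟩
  have left : DubinsReachable umax vmin vmax (circleState r a b θ₀) (circleState r a b ψ) :=
    dubinsReachable_arc ⟨by linarith, le_rfl⟩ humax.ne' hvmin a b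
      (div_nonneg (sub_nonneg.2 hψ) humax.le)
  -- unwind the `n` extra turns along the right circle tangent to the left one at heading `ψ`
  have right := dubinsReachable_arc (θ₀ := ψ) (θ₁ := θ₁) ⟨le_rfl, by linarith⟩
    (neg_ne_zero.2 humax.ne') hvmin (a + 2 * r * sin θ₁) (b - 2 * r * cos θ₁)
    (div_nonneg_of_nonpos (by simp [ψ]; positivity) (by linarith))
  rw [div_neg] at right
  have hstart : circleState (-r) (a + 2 * r * sin θ₁) (b - 2 * r * cos θ₁) ψ =
      circleState r a b ψ := by
    simp only [circleState, ψ, sin_add_nat_mul_two_pi, cos_add_nat_mul_two_pi]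
    ring_nf
  have hend : circleState (-r) (a + 2 * r * sin θ₁) (b - 2 * r * cos θ₁) θ₁ =
      circleState r a b θ₁ := by
    simp only [circleState]
    ring_nf
  rw [hstart, hend] at right
  exact left.trans right

end Maneuvers

/-- Complete controllability of the Dubins system: any two points of `ℝ³` can be joined
by an admissible trajectory. -/
theorem dubins_controllable (umax vmin vmax : ℝ)
    (humax : 0 < umax) (hvmin : 0 < vmin) (hv : vmin ≤ vmax)
    (q₀ q₁ : ℝ × ℝ × ℝ) :
    ∃ T : ℝ, 0 ≤ T ∧ ∃ x y θ u v : ℝ → ℝ,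
      DubinsTraj umax vmin vmax T x y θ u v ∧
      (x 0, y 0, θ 0) = q₀ ∧ (x T, y T, θ T) = q₁ := by
  obtain ⟨x₀, y₀, θ₀⟩ := q₀
  obtain ⟨x₁, y₁, θ₁⟩ := q₁
  set r := vmin / umax
  set a₀ := x₀ - r * sin θ₀
  set b₀ := y₀ + r * cos θ₀
  set a₁ := x₁ - r * sin θ₁
  set b₁ := y₁ + r * cos θ₁
  set Δ : ℂ := ⟨a₁ - a₀, b₁ - b₀⟩
  have hq₀ : (x₀, y₀, θ₀) = circleState r a₀ b₀ θ₀ := by simp only [circleState, a₀, b₀]; ring_nf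
  have hq₁ : (x₁, y₁, θ₁) = circleState r a₁ b₁ θ₁ := by simp only [circleState, a₁, b₁]; ring_nf
  have hΔ : circleState r (a₀ + ‖Δ‖ * cos Δ.arg) (b₀ + ‖Δ‖ * sin Δ.arg) Δ.arg =
      circleState r a₁ b₁ Δ.arg := by
    rw [Complex.norm_mul_cos_arg, Complex.norm_mul_sin_arg]
    simp only [Δ, add_sub_cancel]
  have hline := dubinsReachable_line (vmax := vmax) humax.le ⟨le_rfl, hv⟩ hvmin r a₀ b₀ Δ.arg
    (norm_nonneg Δ)
  rw [hΔ] at hline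
  rw [hq₀, hq₁]
  exact ((dubinsReachable_circleState humax hv a₀ b₀ θ₀ Δ.arg).trans hline).trans
    (dubinsReachable_circleState humax hv a₁ b₁ Δ.arg θ₁)
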